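/- arXiv:2405.17203 — 4 statements merged into one kernel-verified Lean document; each statement's English description precedes it below -/
import Mathlib

section
/- (Single-variable case, n = 1, of the ratio-type theorem, upper bound.) Let f, g : [m, M] → ℝ be continuous with a·x + b ≤ f(x) ≤ c·x + d and g(x) > 0 for all x ∈ [m, M], for fixed reals a, b, c, d. Then Σ_{j=1}^k w_j Φ_j(f(A_j)) ≤ K·g(Ā) in the Loewner order, where K is the maximum of x ↦ (c·x + d)/g(x) over [m, M], f(A_j) is the continuous functional calculus of A_j applied to f, and g(Ā) is the continuous functional calculus of Ā applied to g. -/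
set_option maxHeartbeats 1000000
set_option synthInstance.maxHeartbeats 200000


/-- A normalized positive linear map between algebras of bounded operators on
complex Hilbert spaces: a linear map which is positive for the Loewner order and unital. -/
def IsNormalizedPositiveLinearMap {H K : Type*}
    [NormedAddCommGroup H] [InnerProductSpace ℂ H] [CompleteSpace H]
    [NormedAddCommGroup K] [InnerProductSpace ℂ K] [CompleteSpace K]
    (Φ : (H →L[ℂ] H) →ₗ[ℂ] (K →L[ℂ] K)) : Prop :=
  (∀ X : H →L[ℂ] H, 0 ≤ X → 0 ≤ Φ X) ∧ Φ 1 = 1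

section Aux

variable {K : Type*} [NormedAddCommGroup K] [InnerProductSpace ℂ K] [CompleteSpace K]

lemma aux_smul_nonneg (w : ℝ) (hw : 0 ≤ w) (x : K →L[ℂ] K) (hx : 0 ≤ x) : 0 ≤ w • x := by
  rw [← cfc_const_mul_id w x (IsSelfAdjoint.of_nonneg hx)]
  exact cfc_nonneg fun t ht => mul_nonneg hw (spectrum_nonneg_of_nonneg hx ht)

lemma aux_smul_mono (w : ℝ) (hw : 0 ≤ w) {x y : K →L[ℂ] K} (hxy : x ≤ y) :
    w • x ≤ w • y := by
  rw [← sub_nonneg, ← smul_sub]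
  exact aux_smul_nonneg w hw _ (sub_nonneg.2 hxy)

lemma aux_cfc_affine (a : K →L[ℂ] K) (c d : ℝ) (ha : IsSelfAdjoint a) :
    cfc (fun x : ℝ => c * x + d) a = c • a + d • 1 := by
  rw [cfc_add (a := a) (fun x => c * x) (fun _ => d) (by fun_prop) (by fun_prop),
    cfc_const_mul_id c a, cfc_const d a, Algebra.algebraMap_eq_smul_one]

end Aux

/-- single-variable ratio-type upper bound: `∑ j, w j • Φ j (f(A j)) ≤ K₀ • g(Ā)` with `K₀` the maximum of `(c*x+d)/g x` on `[m, M]`. -/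
theorem stmt_8
    {H K : Type*}
    [NormedAddCommGroup H] [InnerProductSpace ℂ H] [CompleteSpace H]
    [NormedAddCommGroup K] [InnerProductSpace ℂ K] [CompleteSpace K]
    (m M : ℝ) (hmM : m < M) (k : ℕ)
    (A : Fin k → (H →L[ℂ] H))
    (hAsa : ∀ j, IsSelfAdjoint (A j))
    (hAlb : ∀ j, m • (1 : H →L[ℂ] H) ≤ A j)
    (hAub : ∀ j, A j ≤ M • (1 : H →L[ℂ] H))
    (Φ : Fin k → ((H →L[ℂ] H) →ₗ[ℂ] (K →L[ℂ] K)))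
    (hΦ : ∀ j, IsNormalizedPositiveLinearMap (Φ j))
    (w : Fin k → ℝ) (hw0 : ∀ j, 0 ≤ w j) (hw1 : ∑ j, w j = 1)
    (a b c d : ℝ) (f g : ℝ → ℝ)
    (hf : ContinuousOn f (Set.Icc m M)) (hg : ContinuousOn g (Set.Icc m M))
    (hflb : ∀ x ∈ Set.Icc m M, a * x + b ≤ f x)
    (hfub : ∀ x ∈ Set.Icc m M, f x ≤ c * x + d)
    (hgpos : ∀ x ∈ Set.Icc m M, 0 < g x)
    (K₀ : ℝ)
    (hK₀ : IsGreatest ((fun x => (c * x + d) / g x) '' Set.Icc m M) K₀)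
    : (∑ j, w j • Φ j (cfc f (A j))) ≤ K₀ • cfc g (∑ j, w j • Φ j (A j)) := by
  set B : K →L[ℂ] K := ∑ j, w j • Φ j (A j) with hB
  have hone : ∀ (r : ℝ), algebraMap ℝ (H →L[ℂ] H) r = r • (1 : H →L[ℂ] H) :=
    fun r => Algebra.algebraMap_eq_smul_one r
  have honeK : ∀ (r : ℝ), algebraMap ℝ (K →L[ℂ] K) r = r • (1 : K →L[ℂ] K) :=
    fun r => Algebra.algebraMap_eq_smul_one r
  have hmono : ∀ j, ∀ {X Y : H →L[ℂ] H}, X ≤ Y → Φ j X ≤ Φ j Y := by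
    intro j X Y hXY
    rw [← sub_nonneg, ← map_sub]
    exact (hΦ j).1 _ (sub_nonneg.2 hXY)
  have hsmul : ∀ j (r : ℝ) (X : H →L[ℂ] H), Φ j (r • X) = r • Φ j X := by
    intro j r X
    exact (Φ j).map_smul_of_tower r X
  -- bounds on Φ j (A j)
  have hlb' : ∀ j, m • (1 : K →L[ℂ] K) ≤ Φ j (A j) := by
    intro j
    have := hmono j (hAlb j)
    rwa [hsmul, (hΦ j).2] at this
  have hub' : ∀ j, Φ j (A j) ≤ M • (1 : K →L[ℂ] K) := by
    intro j
    have := hmono j (hAub j)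
    rwa [hsmul, (hΦ j).2] at this
  have hsa' : ∀ j, IsSelfAdjoint (Φ j (A j)) := by
    intro j
    have h1 : IsSelfAdjoint (Φ j (A j) - m • (1 : K →L[ℂ] K)) :=
      .of_nonneg (sub_nonneg.2 (hlb' j))
    have h2 : IsSelfAdjoint (m • (1 : K →L[ℂ] K)) := by
      rw [← Algebra.algebraMap_eq_smul_one]
      exact IsSelfAdjoint.algebraMap (K →L[ℂ] K) (star_trivial m)
    simpa using h1.add h2
  have hBsa : IsSelfAdjoint B := by
    rw [hB]
    simp only [IsSelfAdjoint, star_sum, star_smul, star_trivial]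
    exact Finset.sum_congr rfl fun j _ => by rw [hsa' j]
  -- bounds on B
  have hBlb : m • (1 : K →L[ℂ] K) ≤ B := by
    have : m • (1 : K →L[ℂ] K) = ∑ j, w j • (m • (1 : K →L[ℂ] K)) := by
      rw [← Finset.sum_smul, hw1, one_smul]
    rw [this, hB]
    exact Finset.sum_le_sum fun j _ => aux_smul_mono (w j) (hw0 j) (hlb' j)
  have hBub : B ≤ M • (1 : K →L[ℂ] K) := by
    have : M • (1 : K →L[ℂ] K) = ∑ j, w j • (M • (1 : K →L[ℂ] K)) := by
      rw [← Finset.sum_smul, hw1, one_smul]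
    rw [this, hB]
    exact Finset.sum_le_sum fun j _ => aux_smul_mono (w j) (hw0 j) (hub' j)
  -- spectra
  have hspecA : ∀ j, spectrum ℝ (A j) ⊆ Set.Icc m M := by
    intro j x hx
    exact ⟨(algebraMap_le_iff_le_spectrum (hAsa j)).mp (by rw [hone]; exact hAlb j) x hx,
      (le_algebraMap_iff_spectrum_le (hAsa j)).mp (by rw [hone]; exact hAub j) x hx⟩
  have hspecB : spectrum ℝ B ⊆ Set.Icc m M := by
    intro x hx
    exact ⟨(algebraMap_le_iff_le_spectrum hBsa).mp (by rw [honeK]; exact hBlb) x hx,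
      (le_algebraMap_iff_spectrum_le hBsa).mp (by rw [honeK]; exact hBub) x hx⟩
  -- step E : f(A j) ≤ c • A j + d • 1
  have hE : ∀ j, cfc f (A j) ≤ c • A j + d • (1 : H →L[ℂ] H) := by
    intro j
    have h1 : cfc f (A j) ≤ cfc (fun x : ℝ => c * x + d) (A j) :=
      cfc_mono (fun x hx => hfub x (hspecA j hx)) (hf.mono (hspecA j)) (by fun_prop)
    rwa [aux_cfc_affine (A j) c d (hAsa j)] at h1
  -- step F : sum bound
  have hF : (∑ j, w j • Φ j (cfc f (A j))) ≤ c • B + d • (1 : K →L[ℂ] K) := by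
    calc (∑ j, w j • Φ j (cfc f (A j)))
        ≤ ∑ j, w j • Φ j (c • A j + d • (1 : H →L[ℂ] H)) :=
          Finset.sum_le_sum fun j _ => aux_smul_mono (w j) (hw0 j) (hmono j (hE j))
      _ = ∑ j, (c • (w j • Φ j (A j)) + w j • (d • (1 : K →L[ℂ] K))) := by
          refine Finset.sum_congr rfl fun j _ => ?_
          rw [map_add, hsmul, hsmul, (hΦ j).2, smul_add, smul_comm]
      _ = c • B + d • (1 : K →L[ℂ] K) := by
          rw [Finset.sum_add_distrib, ← Finset.smul_sum, ← Finset.sum_smul, hw1, one_smul, hB]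
  -- step G : c • B + d • 1 ≤ K₀ • g(B)
  have hG : c • B + d • (1 : K →L[ℂ] K) ≤ K₀ • cfc g B := by
    have hgt : ∀ x ∈ spectrum ℝ B, c * x + d ≤ K₀ * g x := by
      intro x hx
      have hxm := hspecB hx
      have hle : (c * x + d) / g x ≤ K₀ := hK₀.2 ⟨x, hxm, rfl⟩
      have hg0 := hgpos x hxm
      calc c * x + d = ((c * x + d) / g x) * g x := by field_simp
        _ ≤ K₀ * g x := mul_le_mul_of_nonneg_right hle hg0.le
    have h1 : cfc (fun x : ℝ => c * x + d) B ≤ cfc (fun x : ℝ => K₀ * g x) B :=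
      cfc_mono hgt (by fun_prop) (continuousOn_const.mul (hg.mono hspecB))
    rwa [aux_cfc_affine B c d hBsa, cfc_const_mul K₀ g B (hg.mono hspecB)] at h1
  exact hF.trans hG
end

section
/- (Single-variable case, n = 1, of the ratio-type theorem, lower bound.) Let f, g : [m, M] → ℝ be continuous with a·x + b ≤ f(x) ≤ c·x + d and g(x) > 0 for all x ∈ [m, M], for fixed reals a, b, c, d. Then Σ_{j=1}^k w_j Φ_j(f(A_j)) ≥ κ·g(Ā) in the Loewner order, where κ is the minimum of x ↦ (a·x + b)/g(x) over [m, M], f(A_j) is the continuous functional calculus of A_j applied to f, and g(Ā) is the continuous functional calculus of Ā applied to g. -/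
set_option synthInstance.maxHeartbeats 1000000 in
private lemma smul_le_smul_aux {K : Type*}
    [NormedAddCommGroup K] [InnerProductSpace ℂ K] [CompleteSpace K]
    {x y : K →L[ℂ] K} (r : ℝ) (hr : 0 ≤ r) (h : x ≤ y) : r • x ≤ r • y :=
  smul_le_smul_of_nonneg_left h hr

private lemma affine_cfc_aux {K : Type*}
    [NormedAddCommGroup K] [InnerProductSpace ℂ K] [CompleteSpace K]
    (a b : ℝ) (A : K →L[ℂ] K) (hA : IsSelfAdjoint A) :
    cfc (fun x : ℝ => a * x + b) A = a • A + b • 1 := by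
  rw [cfc_add (a := A) (fun x => a * x) (fun _ => b) (by fun_prop) (by fun_prop),
    cfc_const_mul_id a A hA, cfc_const b A hA, Algebra.algebraMap_eq_smul_one]

set_option maxHeartbeats 400000 in
set_option synthInstance.maxHeartbeats 400000 in
/-- single-variable ratio-type lower bound: `∑ j, w j • Φ j (f(A j)) ≥ κ • g(Ā)` with `κ` the minimum of `(a*x+b)/g x` on `[m, M]`. -/
theorem stmt_9
    {H K : Type*}
    [NormedAddCommGroup H] [InnerProductSpace ℂ H] [CompleteSpace H]
    [NormedAddCommGroup K] [InnerProductSpace ℂ K] [CompleteSpace K]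
    (m M : ℝ) (hmM : m < M) (k : ℕ)
    (A : Fin k → (H →L[ℂ] H))
    (hAsa : ∀ j, IsSelfAdjoint (A j))
    (hAlb : ∀ j, m • (1 : H →L[ℂ] H) ≤ A j)
    (hAub : ∀ j, A j ≤ M • (1 : H →L[ℂ] H))
    (Φ : Fin k → ((H →L[ℂ] H) →ₗ[ℂ] (K →L[ℂ] K)))
    (hΦ : ∀ j, IsNormalizedPositiveLinearMap (Φ j))
    (w : Fin k → ℝ) (hw0 : ∀ j, 0 ≤ w j) (hw1 : ∑ j, w j = 1)
    (a b c d : ℝ) (f g : ℝ → ℝ)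
    (hf : ContinuousOn f (Set.Icc m M)) (hg : ContinuousOn g (Set.Icc m M))
    (hflb : ∀ x ∈ Set.Icc m M, a * x + b ≤ f x)
    (hfub : ∀ x ∈ Set.Icc m M, f x ≤ c * x + d)
    (hgpos : ∀ x ∈ Set.Icc m M, 0 < g x)
    (κ : ℝ)
    (hκ : IsLeast ((fun x => (a * x + b) / g x) '' Set.Icc m M) κ)
    : (∑ j, w j • Φ j (cfc f (A j))) ≥ κ • cfc g (∑ j, w j • Φ j (A j)) := by
  -- monotonicity of the positive maps
  have hmono : ∀ j, ∀ {X Y : H →L[ℂ] H}, X ≤ Y → Φ j X ≤ Φ j Y := by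
    intro j X Y hXY
    have := (hΦ j).1 _ (sub_nonneg.mpr hXY)
    rw [map_sub] at this
    exact sub_nonneg.mp this
  -- Φ j (A j) is selfadjoint with bounds
  have hsmul1 : ∀ j (r : ℝ), Φ j (r • (1 : H →L[ℂ] H)) = r • 1 := by
    intro j r
    rw [LinearMap.map_smul_of_tower, (hΦ j).2]
  have hBlb : ∀ j, m • (1 : K →L[ℂ] K) ≤ Φ j (A j) := fun j =>
    (hsmul1 j m) ▸ hmono j (hAlb j)
  have hBub : ∀ j, Φ j (A j) ≤ M • (1 : K →L[ℂ] K) := fun j =>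
    (hsmul1 j M) ▸ hmono j (hAub j)
  have hBsa : ∀ j, IsSelfAdjoint (Φ j (A j)) := by
    intro j
    have h1 : (0 : K →L[ℂ] K) ≤ Φ j (A j) - m • 1 := sub_nonneg.mpr (hBlb j)
    have h2 := h1.isSelfAdjoint
    have h3 : Φ j (A j) = (Φ j (A j) - m • 1) + m • 1 := by abel
    rw [h3]
    exact h2.add ((IsSelfAdjoint.all m).smul (IsSelfAdjoint.one _))
  set Ab : K →L[ℂ] K := ∑ j, w j • Φ j (A j) with hAb
  have hAbsa : IsSelfAdjoint Ab := by
    rw [hAb, isSelfAdjoint_iff, star_sum]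
    exact Finset.sum_congr rfl fun j _ => ((IsSelfAdjoint.all (w j)).smul (hBsa j)).star_eq
  -- bounds on Ab
  have key_sum : ∀ (X : Fin k → K →L[ℂ] K) (L : K →L[ℂ] K),
      (∀ j, L ≤ X j) → L ≤ ∑ j, w j • X j := by
    intro X L hL
    calc L = ∑ j, w j • L := by
            rw [← Finset.sum_smul, hw1, one_smul]
      _ ≤ ∑ j, w j • X j :=
            Finset.sum_le_sum fun j _ => smul_le_smul_aux (w j) (hw0 j) (hL j)
  have key_sum' : ∀ (X : Fin k → K →L[ℂ] K) (L : K →L[ℂ] K),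
      (∀ j, X j ≤ L) → ∑ j, w j • X j ≤ L := by
    intro X L hL
    calc ∑ j, w j • X j ≤ ∑ j, w j • L :=
            Finset.sum_le_sum fun j _ => smul_le_smul_aux (w j) (hw0 j) (hL j)
      _ = L := by rw [← Finset.sum_smul, hw1, one_smul]
  have hAblb : m • (1 : K →L[ℂ] K) ≤ Ab := key_sum _ _ hBlb
  have hAbub : Ab ≤ M • (1 : K →L[ℂ] K) := key_sum' _ _ hBub
  -- spectra are contained in [m, M]
  have hspec : ∀ (B : K →L[ℂ] K), IsSelfAdjoint B → m • (1 : K →L[ℂ] K) ≤ B →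
      B ≤ M • (1 : K →L[ℂ] K) → spectrum ℝ B ⊆ Set.Icc m M := by
    intro B hB h1 h2 x hx
    constructor
    · revert x hx
      rw [← algebraMap_le_iff_le_spectrum (a := B) hB]
      rwa [Algebra.algebraMap_eq_smul_one]
    · revert x hx
      rw [← le_algebraMap_iff_spectrum_le (a := B) hB]
      rwa [Algebra.algebraMap_eq_smul_one]
  have hspecA : ∀ j, spectrum ℝ (A j) ⊆ Set.Icc m M := by
    intro j x hx
    constructor
    · revert x hx
      rw [← algebraMap_le_iff_le_spectrum (a := A j) (hAsa j)]
      rw [Algebra.algebraMap_eq_smul_one]; exact hAlb j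
    · revert x hx
      rw [← le_algebraMap_iff_spectrum_le (a := A j) (hAsa j)]
      rw [Algebra.algebraMap_eq_smul_one]; exact hAub j
  have hspecAb : spectrum ℝ Ab ⊆ Set.Icc m M := hspec Ab hAbsa hAblb hAbub
  -- Step 1: a • A j + b • 1 ≤ cfc f (A j)
  have step1 : ∀ j, a • A j + b • (1 : H →L[ℂ] H) ≤ cfc f (A j) := by
    intro j
    rw [← affine_cfc_aux a b (A j) (hAsa j)]
    exact cfc_mono (fun x hx => hflb x (hspecA j hx))
      (Continuous.continuousOn (by fun_prop)) (hf.mono (hspecA j))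
  -- Step 2: apply Φ j
  have step2 : ∀ j, a • Φ j (A j) + b • (1 : K →L[ℂ] K) ≤ Φ j (cfc f (A j)) := by
    intro j
    have := hmono j (step1 j)
    rwa [map_add, LinearMap.map_smul_of_tower, hsmul1 j b] at this
  -- Step 3: sum
  have step3 : a • Ab + b • (1 : K →L[ℂ] K) ≤ ∑ j, w j • Φ j (cfc f (A j)) := by
    calc a • Ab + b • (1 : K →L[ℂ] K)
        = (∑ j, a • (w j • Φ j (A j))) + ∑ j, w j • (b • (1 : K →L[ℂ] K)) := by
          rw [← Finset.smul_sum, ← Finset.sum_smul, hw1, one_smul]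
      _ = ∑ j, w j • (a • Φ j (A j) + b • (1 : K →L[ℂ] K)) := by
          rw [← Finset.sum_add_distrib]
          exact Finset.sum_congr rfl fun j _ => by rw [smul_add, smul_comm]
      _ ≤ ∑ j, w j • Φ j (cfc f (A j)) :=
          Finset.sum_le_sum fun j _ => smul_le_smul_aux (w j) (hw0 j) (step2 j)
  -- Step 4: κ • g(Ab) ≤ a • Ab + b • 1
  have step4 : κ • cfc g Ab ≤ a • Ab + b • (1 : K →L[ℂ] K) := by
    have hgcont : ContinuousOn g (spectrum ℝ Ab) := hg.mono hspecAb
    rw [← affine_cfc_aux a b Ab hAbsa, ← cfc_const_mul κ g Ab hgcont]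
    refine cfc_mono (fun x hx => ?_) (continuousOn_const.mul hgcont)
      (Continuous.continuousOn (by fun_prop))
    have hxmem := hspecAb hx
    have hgx := hgpos x hxmem
    have hκx : κ ≤ (a * x + b) / g x := hκ.2 ⟨x, hxmem, rfl⟩
    calc κ * g x ≤ ((a * x + b) / g x) * g x :=
          mul_le_mul_of_nonneg_right hκx hgx.le
      _ = a * x + b := div_mul_cancel₀ _ hgx.ne'
  exact le_trans step4 step3
end

section
/- (Single-variable case, n = 1, of the difference-type theorem.) Let f, g : [m, M] → ℝ be continuous with a·x + b ≤ f(x) ≤ c·x + d for all x ∈ [m, M], for fixed reals a, b, c, d. Then, in the Loewner order, Σ_{j=1}^k w_j Φ_j(f(A_j)) − g(Ā) ≤ C·1_K where C is the maximum of x ↦ c·x + d − g(x) over [m, M], and Σ_{j=1}^k w_j Φ_j(f(A_j)) − g(Ā) ≥ c'·1_K where c' is the minimum of x ↦ a·x + b − g(x) over [m, M]; here f(A_j) and g(Ā) are taken via the continuous functional calculus. -/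
set_option maxHeartbeats 1000000
set_option synthInstance.maxHeartbeats 400000

section Helpers

variable {K : Type*} [NormedAddCommGroup K] [InnerProductSpace ℂ K] [CompleteSpace K]

lemma my_spectrum_subset (m M : ℝ) (T : K →L[ℂ] K) (hT : IsSelfAdjoint T)
    (h1 : m • (1 : K →L[ℂ] K) ≤ T) (h2 : T ≤ M • 1) : spectrum ℝ T ⊆ Set.Icc m M := by
  intro x hx
  exact ⟨algebraMap_le_iff_le_spectrum (R := ℝ) (a := T) hT |>.mp
    (by rwa [Algebra.algebraMap_eq_smul_one]) x hx,
    le_algebraMap_iff_spectrum_le (R := ℝ) (a := T) hT |>.mp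
    (by rwa [Algebra.algebraMap_eq_smul_one]) x hx⟩

lemma my_cfc_affine (T : K →L[ℂ] K) (hT : IsSelfAdjoint T) (p q : ℝ) :
    cfc (fun x : ℝ => p * x + q) T = p • T + q • 1 := by
  rw [cfc_add (a := T) (p * ·) (fun _ => q) (by fun_prop) (by fun_prop),
    cfc_const_mul_id p T hT, cfc_const q T hT, Algebra.algebraMap_eq_smul_one]

lemma my_affine_sub_cfc_le (m M : ℝ) (T : K →L[ℂ] K) (hT : IsSelfAdjoint T)
    (h1 : m • (1 : K →L[ℂ] K) ≤ T) (h2 : T ≤ M • 1)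
    (g : ℝ → ℝ) (hg : ContinuousOn g (Set.Icc m M)) (p q C : ℝ)
    (hC : ∀ x ∈ Set.Icc m M, p * x + q - g x ≤ C) :
    p • T + q • 1 - cfc g T ≤ C • 1 := by
  have hspec := my_spectrum_subset m M T hT h1 h2
  have hgc : ContinuousOn g (spectrum ℝ T) := hg.mono hspec
  have key : cfc (fun x : ℝ => (p * x + q) - g x) T ≤ cfc (fun _ : ℝ => C) T :=
    cfc_mono fun x hx => by simpa using hC x (hspec hx)
  rwa [cfc_sub (fun x => p * x + q) g T (by fun_prop) hgc, my_cfc_affine T hT, cfc_const C T hT,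
    Algebra.algebraMap_eq_smul_one] at key

lemma my_le_affine_sub_cfc (m M : ℝ) (T : K →L[ℂ] K) (hT : IsSelfAdjoint T)
    (h1 : m • (1 : K →L[ℂ] K) ≤ T) (h2 : T ≤ M • 1)
    (g : ℝ → ℝ) (hg : ContinuousOn g (Set.Icc m M)) (p q c' : ℝ)
    (hc' : ∀ x ∈ Set.Icc m M, c' ≤ p * x + q - g x) :
    c' • 1 ≤ p • T + q • 1 - cfc g T := by
  have hspec := my_spectrum_subset m M T hT h1 h2
  have hgc : ContinuousOn g (spectrum ℝ T) := hg.mono hspec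
  have key : cfc (fun _ : ℝ => c') T ≤ cfc (fun x : ℝ => (p * x + q) - g x) T :=
    cfc_mono fun x hx => by simpa using hc' x (hspec hx)
  rwa [cfc_sub (fun x => p * x + q) g T (by fun_prop) hgc, my_cfc_affine T hT, cfc_const c' T hT,
    Algebra.algebraMap_eq_smul_one] at key

lemma my_smul_nonneg (r : ℝ) (hr : 0 ≤ r) {Z : K →L[ℂ] K} (hZ : 0 ≤ Z) : 0 ≤ r • Z := by
  rw [ContinuousLinearMap.nonneg_iff_isPositive, ContinuousLinearMap.isPositive_def'] at hZ ⊢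
  refine ⟨IsSelfAdjoint.smul (show IsSelfAdjoint r from star_trivial r) hZ.1, fun x => ?_⟩
  have h := hZ.2 x
  rw [ContinuousLinearMap.reApplyInnerSelf_apply] at h ⊢
  rw [ContinuousLinearMap.smul_apply]
  have hre : RCLike.re (inner ℂ (r • Z x) x) = r * RCLike.re (inner ℂ (Z x) x) := by
    rw [RCLike.real_smul_eq_coe_smul (K := ℂ) r (Z x), inner_smul_left]
    simp [RCLike.conj_ofReal]
  rw [hre]
  exact mul_nonneg hr h

lemma my_smul_le_smul (r : ℝ) (hr : 0 ≤ r) {X Y : K →L[ℂ] K} (hXY : X ≤ Y) :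
    r • X ≤ r • Y := by
  rw [← sub_nonneg, ← smul_sub]
  exact my_smul_nonneg r hr (sub_nonneg.mpr hXY)

lemma my_sum_wsmul {k : ℕ} {w : Fin k → ℝ} (hw1 : ∑ j, w j = 1) (r : ℝ) :
    (∑ j, w j • r • (1 : K →L[ℂ] K)) = r • 1 := by
  simp_rw [smul_smul, ← Finset.sum_smul, ← Finset.sum_mul, hw1, one_mul]

end Helpers

/-- single-variable difference-type bounds: `∑ j, w j • Φ j (f(A j)) - g(Ā) ≤ C • 1` and `≥ c' • 1` with `C`, `c'` the max/min of `c*x+d-g x` resp. `a*x+b-g x` on `[m, M]`. -/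
theorem stmt_13
    {H K : Type*}
    [NormedAddCommGroup H] [InnerProductSpace ℂ H] [CompleteSpace H]
    [NormedAddCommGroup K] [InnerProductSpace ℂ K] [CompleteSpace K]
    (m M : ℝ) (hmM : m < M) (k : ℕ)
    (A : Fin k → (H →L[ℂ] H))
    (hAsa : ∀ j, IsSelfAdjoint (A j))
    (hAlb : ∀ j, m • (1 : H →L[ℂ] H) ≤ A j)
    (hAub : ∀ j, A j ≤ M • (1 : H →L[ℂ] H))
    (Φ : Fin k → ((H →L[ℂ] H) →ₗ[ℂ] (K →L[ℂ] K)))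
    (hΦ : ∀ j, IsNormalizedPositiveLinearMap (Φ j))
    (w : Fin k → ℝ) (hw0 : ∀ j, 0 ≤ w j) (hw1 : ∑ j, w j = 1)
    (a b c d : ℝ) (f g : ℝ → ℝ)
    (hf : ContinuousOn f (Set.Icc m M)) (hg : ContinuousOn g (Set.Icc m M))
    (hflb : ∀ x ∈ Set.Icc m M, a * x + b ≤ f x)
    (hfub : ∀ x ∈ Set.Icc m M, f x ≤ c * x + d)
    (C : ℝ)
    (hC : IsGreatest ((fun x => c * x + d - g x) '' Set.Icc m M) C)
    (c' : ℝ)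
    (hc' : IsLeast ((fun x => a * x + b - g x) '' Set.Icc m M) c')
    : (∑ j, w j • Φ j (cfc f (A j))) - cfc g (∑ j, w j • Φ j (A j)) ≤ C • (1 : K →L[ℂ] K) ∧
      (∑ j, w j • Φ j (cfc f (A j))) - cfc g (∑ j, w j • Φ j (A j)) ≥ c' • (1 : K →L[ℂ] K) := by
  have hmono : ∀ j, ∀ X Y : H →L[ℂ] H, X ≤ Y → Φ j X ≤ Φ j Y := by
    intro j X Y hXY
    have := (hΦ j).1 (Y - X) (by rwa [sub_nonneg])
    rw [map_sub] at this
    exact sub_nonneg.mp this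
  have hsmul : ∀ j (r : ℝ) (X : H →L[ℂ] H), Φ j (r • X) = r • Φ j X := fun j r X =>
    (Φ j).map_smul_of_tower r X
  set B : Fin k → (K →L[ℂ] K) := fun j => Φ j (A j) with hB
  have hBlb : ∀ j, m • (1 : K →L[ℂ] K) ≤ B j := by
    intro j
    have := hmono j (m • 1) (A j) (hAlb j)
    rwa [hsmul j m 1, (hΦ j).2] at this
  have hBub : ∀ j, B j ≤ M • (1 : K →L[ℂ] K) := by
    intro j
    have := hmono j (A j) (M • 1) (hAub j)
    rwa [hsmul j M 1, (hΦ j).2] at this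
  have hBsa : ∀ j, IsSelfAdjoint (B j) := by
    intro j
    have h0 : (0 : K →L[ℂ] K) ≤ B j - m • 1 := sub_nonneg.mpr (hBlb j)
    have h1 : IsSelfAdjoint (B j - m • 1) := .of_nonneg h0
    have h2 : IsSelfAdjoint (m • (1 : K →L[ℂ] K)) :=
      IsSelfAdjoint.smul (show IsSelfAdjoint m from star_trivial m) (IsSelfAdjoint.one _)
    simpa using h1.add h2
  set Abar : K →L[ℂ] K := ∑ j, w j • B j with hAbar
  have hAbarsa : IsSelfAdjoint Abar := by
    rw [hAbar, IsSelfAdjoint, star_sum]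
    exact Finset.sum_congr rfl fun j _ => by rw [star_smul, star_trivial, (hBsa j).star_eq]
  have hAbarlb : m • (1 : K →L[ℂ] K) ≤ Abar := by
    calc m • (1 : K →L[ℂ] K) = ∑ j, w j • m • (1 : K →L[ℂ] K) := (my_sum_wsmul hw1 m).symm
      _ ≤ ∑ j, w j • B j := Finset.sum_le_sum fun j _ => my_smul_le_smul _ (hw0 j) (hBlb j)
  have hAbarub : Abar ≤ M • (1 : K →L[ℂ] K) := by
    calc Abar ≤ ∑ j, w j • M • (1 : K →L[ℂ] K) :=
          Finset.sum_le_sum fun j _ => my_smul_le_smul _ (hw0 j) (hBub j)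
      _ = M • (1 : K →L[ℂ] K) := my_sum_wsmul hw1 M
  -- bounds on each Φ j (cfc f (A j))
  have hjub : ∀ j, Φ j (cfc f (A j)) ≤ c • B j + d • 1 := by
    intro j
    have hspecA := my_spectrum_subset m M (A j) (hAsa j) (hAlb j) (hAub j)
    have h1 : cfc f (A j) ≤ cfc (fun x : ℝ => c * x + d) (A j) :=
      cfc_mono (fun x hx => hfub x (hspecA hx)) (hf.mono hspecA) (by fun_prop)
    rw [my_cfc_affine (A j) (hAsa j) c d] at h1
    have := hmono j _ _ h1
    rwa [map_add, hsmul j c (A j), hsmul j d 1, (hΦ j).2] at this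
  have hjlb : ∀ j, a • B j + b • 1 ≤ Φ j (cfc f (A j)) := by
    intro j
    have hspecA := my_spectrum_subset m M (A j) (hAsa j) (hAlb j) (hAub j)
    have h1 : cfc (fun x : ℝ => a * x + b) (A j) ≤ cfc f (A j) :=
      cfc_mono (fun x hx => hflb x (hspecA hx)) (by fun_prop) (hf.mono hspecA)
    rw [my_cfc_affine (A j) (hAsa j) a b] at h1
    have := hmono j _ _ h1
    rwa [map_add, hsmul j a (A j), hsmul j b 1, (hΦ j).2] at this
  have hsum_eq : ∀ p q : ℝ, (∑ j, w j • (p • B j + q • (1 : K →L[ℂ] K)))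
      = p • Abar + q • 1 := by
    intro p q
    have h1 : (∑ j, w j • (p • B j)) = p • Abar := by
      rw [hAbar, Finset.smul_sum]
      exact Finset.sum_congr rfl fun j _ => smul_comm _ _ _
    calc (∑ j, w j • (p • B j + q • (1 : K →L[ℂ] K)))
        = (∑ j, w j • (p • B j)) + ∑ j, w j • q • (1 : K →L[ℂ] K) := by
          simp_rw [smul_add]; exact Finset.sum_add_distrib
      _ = p • Abar + q • 1 := by rw [h1, my_sum_wsmul hw1 q]
  have hub : (∑ j, w j • Φ j (cfc f (A j))) ≤ c • Abar + d • 1 := by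
    calc (∑ j, w j • Φ j (cfc f (A j))) ≤ ∑ j, w j • (c • B j + d • (1 : K →L[ℂ] K)) :=
          Finset.sum_le_sum fun j _ => my_smul_le_smul _ (hw0 j) (hjub j)
      _ = c • Abar + d • 1 := hsum_eq c d
  have hlb : a • Abar + b • 1 ≤ (∑ j, w j • Φ j (cfc f (A j))) := by
    calc a • Abar + b • (1 : K →L[ℂ] K) = ∑ j, w j • (a • B j + b • (1 : K →L[ℂ] K)) :=
          (hsum_eq a b).symm
      _ ≤ ∑ j, w j • Φ j (cfc f (A j)) :=
          Finset.sum_le_sum fun j _ => my_smul_le_smul _ (hw0 j) (hjlb j)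
  constructor
  · calc (∑ j, w j • Φ j (cfc f (A j))) - cfc g Abar ≤ (c • Abar + d • 1) - cfc g Abar :=
          sub_le_sub_right hub _
      _ ≤ C • 1 := my_affine_sub_cfc_le m M Abar hAbarsa hAbarlb hAbarub g hg c d C
          (fun x hx => hC.2 ⟨x, hx, rfl⟩)
  · calc c' • (1 : K →L[ℂ] K) ≤ (a • Abar + b • 1) - cfc g Abar :=
          my_le_affine_sub_cfc m M Abar hAbarsa hAbarlb hAbarub g hg a b c'
          (fun x hx => hc'.2 ⟨x, hx, rfl⟩)
      _ ≤ (∑ j, w j • Φ j (cfc f (A j))) - cfc g Abar := sub_le_sub_right hlb _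
end

section
/- (Sobolev inequality for hypercomplex functions, single-variable case n = 1.) Let m̂ > 1 be an integer, let p be a real number with 1 < p < m̂, and set q = m̂p/(m̂ − p). Let f : ℝ → ℝ be continuously differentiable on an open neighborhood of [m, M] and assume |f'(x)| > 0 for all x ∈ [m, M]. Then there exists a constant C₁ > 0 (depending on f, p, q, m, M but not on the operators A_j or the maps Φ_j) such that, in the Loewner order, (Σ_{j=1}^k w_j Φ_j(|f|(A_j)^p))^{1/p} ≤ C₁·(Σ_{j=1}^k w_j Φ_j(|f'|(A_j)^q))^{1/q}, where |f|(A_j) and |f'|(A_j) denote the continuous functional calculus of A_j applied to x ↦ |f(x)| and x ↦ |f'(x)| respectively, and the real powers p, q, 1/p, 1/q of positive self-adjoint operators are taken via the continuous functional calculus. -/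
set_option maxHeartbeats 1000000
set_option synthInstance.maxHeartbeats 1000000
set_option linter.unusedSectionVars false
set_option linter.unusedVariables false

section Aux
variable {K : Type*} [NormedAddCommGroup K] [InnerProductSpace ℂ K] [CompleteSpace K]

private lemma smul_nonneg_clm {r : ℝ} (hr : 0 ≤ r) {T : K →L[ℂ] K} (hT : 0 ≤ T) :
    0 ≤ r • T := by
  have hsa : IsSelfAdjoint T := .of_nonneg hT
  have h1 : r • T = cfc (fun x : ℝ => r • x) T := by
    conv_lhs => rw [← cfc_id ℝ T hsa]
    exact (cfc_smul r id T).symm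
  rw [h1]
  exact cfc_nonneg fun x hx => by
    simpa [smul_eq_mul] using mul_nonneg hr (spectrum_nonneg_of_nonneg hT hx)

private lemma smul_mono_clm {r : ℝ} (hr : 0 ≤ r) {S T : K →L[ℂ] K} (h : S ≤ T) :
    r • S ≤ r • T := by
  rw [← sub_nonneg, ← smul_sub]
  exact smul_nonneg_clm hr (sub_nonneg.mpr h)

variable {H : Type*} [NormedAddCommGroup H] [InnerProductSpace ℂ H] [CompleteSpace H]

private lemma map_real_smul_clm (Φ : (H →L[ℂ] H) →ₗ[ℂ] (K →L[ℂ] K)) (r : ℝ) (X : H →L[ℂ] H) :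
    Φ (r • X) = r • Φ X := by
  rw [← algebraMap_smul ℂ r X, map_smul, algebraMap_smul]

private lemma phi_mono {Φ : (H →L[ℂ] H) →ₗ[ℂ] (K →L[ℂ] K)}
    (hΦ : ∀ X : H →L[ℂ] H, 0 ≤ X → 0 ≤ Φ X) {X Y : H →L[ℂ] H} (h : X ≤ Y) : Φ X ≤ Φ Y := by
  have := hΦ _ (sub_nonneg.mpr h)
  rw [map_sub, sub_nonneg] at this
  exact this

end Aux


/-- Sobolev inequality for hypercomplex functions (single-variable case).
For an integer `mhat > 1`, a real `1 < p < mhat` and `q = mhatp/(mhat-p)`, if `f : ℝ → ℝ` is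
continuously differentiable on an open neighborhood of `[m, M]` with `|f'| > 0` on `[m, M]`,
then there is a constant `C₁ > 0` (independent of the operators `A j`, the maps `Φ j` and the
weights `w`) such that
`(∑ j, w j • Φ j (|f|(A j) ^ p)) ^ (1/p) ≤ C₁ • (∑ j, w j • Φ j (|f'|(A j) ^ q)) ^ (1/q)`
in the Loewner order, all functions of self-adjoint operators being taken via the continuous
functional calculus. -/
theorem stmt_19 {H K : Type*}
    [NormedAddCommGroup H] [InnerProductSpace ℂ H] [CompleteSpace H]
    [NormedAddCommGroup K] [InnerProductSpace ℂ K] [CompleteSpace K]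
    (mhat : ℕ) (hm : 1 < mhat) (p : ℝ) (hp1 : 1 < p) (hpm : p < (mhat : ℝ))
    (q : ℝ) (hq : q = (mhat : ℝ) * p / ((mhat : ℝ) - p))
    (m M : ℝ) (hmM : m < M)
    (f : ℝ → ℝ) (U : Set ℝ) (hU : IsOpen U) (hMU : Set.Icc m M ⊆ U)
    (hf : ContDiffOn ℝ 1 f U)
    (hf' : ∀ x ∈ Set.Icc m M, 0 < |deriv f x|) :
    ∃ C₁ > (0 : ℝ), ∀ (k : ℕ) (A : Fin k → (H →L[ℂ] H)),
      (∀ j, IsSelfAdjoint (A j)) →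
      (∀ j, m • (1 : H →L[ℂ] H) ≤ A j) →
      (∀ j, A j ≤ M • (1 : H →L[ℂ] H)) →
      ∀ (Φ : Fin k → ((H →L[ℂ] H) →ₗ[ℂ] (K →L[ℂ] K))),
        (∀ j, IsNormalizedPositiveLinearMap (Φ j)) →
        ∀ (w : Fin k → ℝ), (∀ j, 0 ≤ w j) → (∑ j, w j = 1) →
        cfc (fun y : ℝ => y ^ (1 / p))
            (∑ j, w j • Φ j (cfc (fun y : ℝ => y ^ p) (cfc (fun x : ℝ => |f x|) (A j))))
          ≤ C₁ • cfc (fun y : ℝ => y ^ (1 / q))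
            (∑ j, w j • Φ j (cfc (fun y : ℝ => y ^ q) (cfc (fun x : ℝ => |deriv f x|) (A j)))) := by
  have hpos_p : (0:ℝ) < p := lt_trans one_pos hp1
  have hmp : (0:ℝ) < (mhat : ℝ) - p := sub_pos.mpr hpm
  have hmhat0 : (0:ℝ) < (mhat : ℝ) := lt_trans hpos_p hpm
  have hqpos : (0:ℝ) < q := by rw [hq]; exact div_pos (mul_pos hmhat0 hpos_p) hmp
  have hfc : ContinuousOn f U := hf.continuousOn
  have hf'cont : ContinuousOn (deriv f) U := hf.continuousOn_deriv_of_isOpen hU le_rfl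
  obtain ⟨C, hC⟩ := isCompact_Icc.exists_bound_of_continuousOn (hfc.mono hMU)
  set B := max C 1 with hBdef
  have hB0 : (0:ℝ) < B := lt_of_lt_of_le one_pos (le_max_right _ _)
  have hfB : ∀ x ∈ Set.Icc m M, |f x| ≤ B := fun x hx =>
    le_trans (by simpa [Real.norm_eq_abs] using hC x hx) (le_max_left _ _)
  obtain ⟨x₀, hx₀, hmin⟩ := isCompact_Icc.exists_isMinOn ⟨m, Set.left_mem_Icc.mpr hmM.le⟩
    ((hf'cont.mono hMU).abs)
  set c := |deriv f x₀| with hcdef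
  have hc0 : 0 < c := hf' x₀ hx₀
  have hcle : ∀ x ∈ Set.Icc m M, c ≤ |deriv f x| := fun x hx => hmin hx
  refine ⟨B / c, div_pos hB0 hc0, ?_⟩
  intro k A hsa hmA hMA Φ hΦ w hw hw1
  have hcont : ∀ r : ℝ, 0 < r → Continuous (fun y : ℝ => y ^ r) := fun r hr =>
    continuous_iff_continuousAt.mpr fun x => Real.continuousAt_rpow_const x r (Or.inr hr.le)
  have hspecA : ∀ j, spectrum ℝ (A j) ⊆ Set.Icc m M := by
    intro j x hx
    refine ⟨(algebraMap_le_iff_le_spectrum (hsa j)).mp ?_ x hx,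
      (le_algebraMap_iff_spectrum_le (hsa j)).mp ?_ x hx⟩
    · rw [Algebra.algebraMap_eq_smul_one]; exact hmA j
    · rw [Algebra.algebraMap_eq_smul_one]; exact hMA j
  -- LHS side
  have hstep1 : ∀ j, 0 ≤ Φ j (cfc (fun y : ℝ => y ^ p) (cfc (fun x : ℝ => |f x|) (A j))) ∧
      Φ j (cfc (fun y : ℝ => y ^ p) (cfc (fun x : ℝ => |f x|) (A j)))
        ≤ algebraMap ℝ (K →L[ℂ] K) (B ^ p) := by
    intro j
    have habs_cont : ContinuousOn (fun x : ℝ => |f x|) (spectrum ℝ (A j)) :=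
      ((hfc.mono hMU).mono (hspecA j)).abs
    have hb_sa : IsSelfAdjoint (cfc (fun x : ℝ => |f x|) (A j)) :=
      cfc_predicate (fun x : ℝ => |f x|) (A j)
    have hb_spec : spectrum ℝ (cfc (fun x : ℝ => |f x|) (A j)) ⊆ Set.Icc 0 B := by
      rw [cfc_map_spectrum (fun x : ℝ => |f x|) (A j) (hsa j) habs_cont]
      rintro - ⟨x, hx, rfl⟩
      exact ⟨abs_nonneg _, hfB x (hspecA j hx)⟩
    constructor
    · exact (hΦ j).1 _ (cfc_nonneg fun y hy => Real.rpow_nonneg (hb_spec hy).1 p)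
    · have hX : cfc (fun y : ℝ => y ^ p) (cfc (fun x : ℝ => |f x|) (A j))
          ≤ algebraMap ℝ (H →L[ℂ] H) (B ^ p) := by
        refine cfc_le_algebraMap _ _ _ (fun y hy => ?_)
          ((hcont p hpos_p).continuousOn) hb_sa
        exact Real.rpow_le_rpow (hb_spec hy).1 (hb_spec hy).2 hpos_p.le
      calc Φ j (cfc (fun y : ℝ => y ^ p) (cfc (fun x : ℝ => |f x|) (A j)))
          ≤ Φ j (algebraMap ℝ (H →L[ℂ] H) (B ^ p)) := phi_mono (hΦ j).1 hX
        _ = algebraMap ℝ (K →L[ℂ] K) (B ^ p) := by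
            rw [Algebra.algebraMap_eq_smul_one, map_real_smul_clm, (hΦ j).2,
              Algebra.algebraMap_eq_smul_one]
  set S₁ := ∑ j, w j • Φ j (cfc (fun y : ℝ => y ^ p) (cfc (fun x : ℝ => |f x|) (A j))) with hS₁
  have hS₁nonneg : 0 ≤ S₁ :=
    Finset.sum_nonneg fun j _ => smul_nonneg_clm (hw j) (hstep1 j).1
  have hS₁le : S₁ ≤ algebraMap ℝ (K →L[ℂ] K) (B ^ p) := by
    calc S₁ ≤ ∑ j, w j • algebraMap ℝ (K →L[ℂ] K) (B ^ p) :=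
        Finset.sum_le_sum fun j _ => smul_mono_clm (hw j) (hstep1 j).2
      _ = algebraMap ℝ (K →L[ℂ] K) (B ^ p) := by rw [← Finset.sum_smul, hw1, one_smul]
  have hS₁sa : IsSelfAdjoint S₁ := .of_nonneg hS₁nonneg
  have hLHS : cfc (fun y : ℝ => y ^ (1 / p)) S₁ ≤ algebraMap ℝ (K →L[ℂ] K) B := by
    refine cfc_le_algebraMap _ _ _ (fun y hy => ?_)
      ((hcont (1/p) (by positivity)).continuousOn) hS₁sa
    have hy0 : 0 ≤ y := spectrum_nonneg_of_nonneg hS₁nonneg hy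
    have hyB : y ≤ B ^ p := (le_algebraMap_iff_spectrum_le hS₁sa).mp hS₁le y hy
    calc y ^ (1/p) ≤ (B ^ p) ^ (1/p) := Real.rpow_le_rpow hy0 hyB (by positivity)
      _ = B := by
          rw [← Real.rpow_mul hB0.le, mul_one_div, div_self hpos_p.ne', Real.rpow_one]
  -- RHS side
  have hstep2 : ∀ j, algebraMap ℝ (K →L[ℂ] K) (c ^ q)
      ≤ Φ j (cfc (fun y : ℝ => y ^ q) (cfc (fun x : ℝ => |deriv f x|) (A j))) := by
    intro j
    have habs_cont : ContinuousOn (fun x : ℝ => |deriv f x|) (spectrum ℝ (A j)) :=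
      ((hf'cont.mono hMU).mono (hspecA j)).abs
    have hb_sa : IsSelfAdjoint (cfc (fun x : ℝ => |deriv f x|) (A j)) :=
      cfc_predicate (fun x : ℝ => |deriv f x|) (A j)
    have hb_spec : spectrum ℝ (cfc (fun x : ℝ => |deriv f x|) (A j)) ⊆ Set.Ici c := by
      rw [cfc_map_spectrum (fun x : ℝ => |deriv f x|) (A j) (hsa j) habs_cont]
      rintro - ⟨x, hx, rfl⟩
      exact hcle x (hspecA j hx)
    have hX : algebraMap ℝ (H →L[ℂ] H) (c ^ q)
        ≤ cfc (fun y : ℝ => y ^ q) (cfc (fun x : ℝ => |deriv f x|) (A j)) := by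
      refine algebraMap_le_cfc _ _ _ (fun y hy => ?_)
        ((hcont q hqpos).continuousOn) hb_sa
      exact Real.rpow_le_rpow hc0.le (hb_spec hy) hqpos.le
    calc algebraMap ℝ (K →L[ℂ] K) (c ^ q)
        = Φ j (algebraMap ℝ (H →L[ℂ] H) (c ^ q)) := by
          rw [Algebra.algebraMap_eq_smul_one, Algebra.algebraMap_eq_smul_one,
            map_real_smul_clm, (hΦ j).2]
      _ ≤ Φ j (cfc (fun y : ℝ => y ^ q) (cfc (fun x : ℝ => |deriv f x|) (A j))) :=
          phi_mono (hΦ j).1 hX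
  set S₂ := ∑ j, w j • Φ j (cfc (fun y : ℝ => y ^ q) (cfc (fun x : ℝ => |deriv f x|) (A j)))
    with hS₂
  have hS₂ge : algebraMap ℝ (K →L[ℂ] K) (c ^ q) ≤ S₂ := by
    calc algebraMap ℝ (K →L[ℂ] K) (c ^ q)
        = ∑ j, w j • algebraMap ℝ (K →L[ℂ] K) (c ^ q) := by
          rw [← Finset.sum_smul, hw1, one_smul]
      _ ≤ S₂ := Finset.sum_le_sum fun j _ => smul_mono_clm (hw j) (hstep2 j)
  have hS₂nonneg : 0 ≤ S₂ := by
    refine le_trans ?_ hS₂ge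
    rw [Algebra.algebraMap_eq_smul_one]
    exact smul_nonneg_clm (by positivity) zero_le_one
  have hS₂sa : IsSelfAdjoint S₂ := .of_nonneg hS₂nonneg
  have hRHS : algebraMap ℝ (K →L[ℂ] K) c ≤ cfc (fun y : ℝ => y ^ (1 / q)) S₂ := by
    refine algebraMap_le_cfc _ _ _ (fun y hy => ?_)
      ((hcont (1/q) (by positivity)).continuousOn) hS₂sa
    have hyc : c ^ q ≤ y := (algebraMap_le_iff_le_spectrum hS₂sa).mp hS₂ge y hy
    calc c = (c ^ q) ^ (1/q) := by
          rw [← Real.rpow_mul hc0.le, mul_one_div, div_self hqpos.ne', Real.rpow_one]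
      _ ≤ y ^ (1/q) := Real.rpow_le_rpow (by positivity) hyc (by positivity)
  calc cfc (fun y : ℝ => y ^ (1 / p)) S₁ ≤ algebraMap ℝ (K →L[ℂ] K) B := hLHS
    _ = (B / c) • algebraMap ℝ (K →L[ℂ] K) c := by
        rw [Algebra.algebraMap_eq_smul_one, Algebra.algebraMap_eq_smul_one, smul_smul,
          div_mul_cancel₀ _ hc0.ne']
    _ ≤ (B / c) • cfc (fun y : ℝ => y ^ (1 / q)) S₂ :=
        smul_mono_clm (by positivity) hRHS
end
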